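/- arXiv:0805.4432 — 6 statements merged into one kernel-verified Lean document; each statement's English description precedes it below -/
import Mathlib

section
/- (Mackey formula for coinvariants.) Let G be a finite group, H ≤ G, R a commutative ring, and M an R-module with R-linear G-action. Let D ⊆ G be a set of representatives for the double cosets H\G/H. Then the composition tr ∘ π : M_H → M_G → M_H of the natural projection with the transfer equals Σ_{x ∈ D} (c_x ∘ tr_x), where tr_x : M_H → M_{H ∩ x⁻¹Hx} is the transfer for the subgroup H ∩ x⁻¹Hx of H, and c_x : M_{H ∩ x⁻¹Hx} → M_H is the map sending [m] to [x•m] (which is well defined). -/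
variable {G : Type*} [Group G] [Fintype G] {R : Type*} [CommRing R]
  {M : Type*} [AddCommGroup M] [Module R M]
  [DistribMulAction G M] [SMulCommClass G R M]

/-- The submodule of `M` generated by the elements `m - k • m` for `k ∈ K`,
so that `M ⧸ coinvAug R M K` is the module of `K`-coinvariants. -/
def coinvAug (R M : Type*) {G : Type*} [Group G] [CommRing R] [AddCommGroup M]
    [Module R M] [DistribMulAction G M] [SMulCommClass G R M] (K : Subgroup G) :
    Submodule R M :=
  Submodule.span R {x : M | ∃ (m : M) (k : G), k ∈ K ∧ x = m - k • m}

/-- The natural projection `M_H → M_G` induced by the identity of `M`. -/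
def coinvProj (R M : Type*) {G : Type*} [Group G] [CommRing R] [AddCommGroup M]
    [Module R M] [DistribMulAction G M] [SMulCommClass G R M] (H : Subgroup G) :
    (M ⧸ coinvAug R M H) →ₗ[R] M ⧸ coinvAug R M (⊤ : Subgroup G) :=
  Submodule.mapQ _ _ LinearMap.id
    (by
      rw [Submodule.comap_id]
      exact Submodule.span_mono fun x hx => by
        obtain ⟨m, k, _, e⟩ := hx
        exact ⟨m, k, Subgroup.mem_top k, e⟩)

/-- The subgroup `H ∩ x⁻¹Hx` of `G`. -/
def conjInter {G : Type*} [Group G] (H : Subgroup G) (x : G) : Subgroup G :=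
  H ⊓ Subgroup.comap (MulAut.conj x).toMonoidHom H

/-! A double coset `HxH` is the disjoint union of the right cosets `Hxt`, `t` running over
representatives of `(H ∩ x⁻¹Hx)\H`, so the products `x * t` with `x ∈ D` form a set of
representatives of `H\G`. Summing `g ↦ [g • m]`, which is left `H`-invariant on `M_H`, over two
such sets gives the same result; over `S` it is `tr (π [m])`, over the `x * t` it is
`∑ₓ cₓ (trₓ [m])`. -/

def IsRightTransversal {ι : Type*} (H : Subgroup G) (I : Finset ι) (f : ι → G) : Prop :=
  ∀ g : G, ∃! i, i ∈ I ∧ g * (f i)⁻¹ ∈ H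

omit [Fintype G] in
theorem sum_eq_sum_of_isRightTransversal {ι κ N : Type*} [AddCommMonoid N] {H : Subgroup G}
    {φ : G → N} (hφ : ∀ h ∈ H, ∀ g, φ (h * g) = φ g) {I : Finset ι} {f : ι → G}
    (hI : IsRightTransversal H I f) {J : Finset κ} {f' : κ → G}
    (hJ : IsRightTransversal H J f') :
    ∑ i ∈ I, φ (f i) = ∑ j ∈ J, φ (f' j) := by
  choose rep hrep hrep_unique using fun i => hJ (f i)
  refine Finset.sum_bij (fun i _ => rep i) (fun i _ => (hrep i).1) ?_ ?_ ?_
  · intro i hi j hj hij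
    have hfij : f i * (f j)⁻¹ ∈ H := by
      simpa [hij, mul_assoc] using H.mul_mem (hrep i).2 (H.inv_mem (hrep j).2)
    exact (hI (f i)).unique ⟨hi, by simp [H.one_mem]⟩ ⟨hj, hfij⟩
  · intro j hj
    obtain ⟨i, ⟨hi, hji⟩, -⟩ := hI (f' j)
    refine ⟨i, hi, (hrep_unique i j ⟨hj, ?_⟩).symm⟩
    simpa using H.inv_mem hji
  · intro i _
    simpa using hφ _ (hrep i).2 (f' (rep i))

omit [Fintype G] in
theorem mem_conjInter_iff {H : Subgroup G} {x g : G} :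
    g ∈ conjInter H x ↔ g ∈ H ∧ x * g * x⁻¹ ∈ H :=
  Iff.rfl

omit [Fintype G] in
theorem isRightTransversal_sigma_mul {H : Subgroup G} {D : Finset G}
    (hD : ∀ g : G, ∃! x, x ∈ D ∧ ∃ h₁ ∈ H, ∃ h₂ ∈ H, g = h₁ * x * h₂) {Sx : G → Finset G}
    (hSx : ∀ x ∈ D, (∀ s ∈ Sx x, s ∈ H) ∧
      ∀ h ∈ H, ∃! s, s ∈ Sx x ∧ h * s⁻¹ ∈ conjInter H x) :
    IsRightTransversal H (D.sigma Sx) fun p => p.1 * p.2 := by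
  intro g
  obtain ⟨x, ⟨hxD, h₁, hh₁, h₂, hh₂, rfl⟩, -⟩ := hD g
  obtain ⟨t, ⟨ht, hh₂t⟩, -⟩ := (hSx x hxD).2 h₂ hh₂
  have hgt : h₁ * x * h₂ * (x * t)⁻¹ ∈ H := by
    have : h₁ * x * h₂ * (x * t)⁻¹ = h₁ * (x * (h₂ * t⁻¹) * x⁻¹) := by group
    exact this ▸ H.mul_mem hh₁ (mem_conjInter_iff.1 hh₂t).2
  refine ⟨⟨x, t⟩, ⟨Finset.mem_sigma.2 ⟨hxD, ht⟩, hgt⟩, ?_⟩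
  rintro ⟨y, u⟩ ⟨hyu, hgu⟩
  obtain ⟨hyD, hu⟩ := Finset.mem_sigma.1 hyu
  have htH := (hSx x hxD).1 t ht
  have huH := (hSx y hyD).1 u hu
  obtain rfl : y = x := by
    have hug : y * u * (h₁ * x * h₂)⁻¹ ∈ H := by simpa using H.inv_mem hgu
    exact (hD y).unique ⟨hyD, 1, H.one_mem, 1, H.one_mem, by group⟩
      ⟨hxD, _, H.mul_mem hug hh₁, h₂ * u⁻¹, H.mul_mem hh₂ (H.inv_mem huH), by group⟩
  have hut : u * t⁻¹ ∈ conjInter H y := by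
    refine mem_conjInter_iff.2 ⟨H.mul_mem huH (H.inv_mem htH), ?_⟩
    have : y * (u * t⁻¹) * y⁻¹ = (h₁ * y * h₂ * (y * u)⁻¹)⁻¹ * (h₁ * y * h₂ * (y * t)⁻¹) := by
      group
    exact this ▸ H.mul_mem (H.inv_mem hgu) hgt
  obtain rfl : u = t := ((hSx y hyD).2 u huH).unique
    ⟨hu, by rw [mul_inv_cancel]; exact one_mem _⟩ ⟨ht, hut⟩
  rfl

omit [Fintype G] in
theorem coinvAug_mk_smul_of_mem {K : Subgroup G} {k : G} (hk : k ∈ K) (m : M) :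
    (Submodule.Quotient.mk (k • m) : M ⧸ coinvAug R M K) = Submodule.Quotient.mk m :=
  (Submodule.Quotient.eq _).2 <| by
    rw [← neg_sub]
    exact neg_mem (Submodule.subset_span ⟨m, k, hk, rfl⟩)

/-- Mackey formula for coinvariants: if `D` is a set of representatives of the
double cosets `H\G/H`, `tr : M_G → M_H` is the transfer, `π : M_H → M_G` the
natural projection, `trx x : M_H → M_{H ∩ x⁻¹Hx}` the transfer for the
subgroup `H ∩ x⁻¹Hx` of `H`, and `cx x : M_{H ∩ x⁻¹Hx} → M_H` the map
`[m] ↦ [x • m]`, then `tr ∘ π = ∑_{x ∈ D} cx x ∘ trx x`. -/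
theorem mackey_coinvariants (H : Subgroup G)
    (D : Finset G)
    (hD : ∀ g : G, ∃! x, x ∈ D ∧ ∃ h₁ ∈ H, ∃ h₂ ∈ H, g = h₁ * x * h₂)
    (S : Finset G) (hS : ∀ g : G, ∃! s, s ∈ S ∧ g * s⁻¹ ∈ H)
    (Sx : G → Finset G)
    (hSx : ∀ x ∈ D, (∀ s ∈ Sx x, s ∈ H) ∧
      ∀ h ∈ H, ∃! s, s ∈ Sx x ∧ h * s⁻¹ ∈ conjInter H x)
    (tr : (M ⧸ coinvAug R M (⊤ : Subgroup G)) →ₗ[R] M ⧸ coinvAug R M H)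
    (htr : ∀ m : M, tr (Submodule.Quotient.mk m) =
      ∑ s ∈ S, (Submodule.Quotient.mk (s • m) : M ⧸ coinvAug R M H))
    (trx : (x : G) → (M ⧸ coinvAug R M H) →ₗ[R] M ⧸ coinvAug R M (conjInter H x))
    (htrx : ∀ x ∈ D, ∀ m : M, trx x (Submodule.Quotient.mk m) =
      ∑ s ∈ Sx x, (Submodule.Quotient.mk (s • m) : M ⧸ coinvAug R M (conjInter H x)))
    (cx : (x : G) → (M ⧸ coinvAug R M (conjInter H x)) →ₗ[R] M ⧸ coinvAug R M H)
    (hcx : ∀ (x : G) (m : M),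
      cx x (Submodule.Quotient.mk m) = Submodule.Quotient.mk (x • m)) :
    tr.comp (coinvProj R M H) = ∑ x ∈ D, (cx x).comp (trx x) := by
  refine Submodule.linearMap_qext _ (LinearMap.ext fun m => ?_)
  simp only [LinearMap.comp_apply, LinearMap.sum_apply]
  have hcx_trx : ∀ x ∈ D, cx x (trx x (Submodule.Quotient.mk m)) =
      ∑ t ∈ Sx x, (Submodule.Quotient.mk ((x * t) • m) : M ⧸ coinvAug R M H) := by
    intro x hx
    simp only [htrx x hx, map_sum, hcx, mul_smul]
  calc tr (Submodule.Quotient.mk m)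
      = ∑ s ∈ S, (Submodule.Quotient.mk (s • m) : M ⧸ coinvAug R M H) := htr m
    _ = ∑ p ∈ D.sigma Sx, Submodule.Quotient.mk ((p.1 * p.2) • m) :=
      (sum_eq_sum_of_isRightTransversal
        (fun h hh g => by rw [mul_smul, coinvAug_mk_smul_of_mem hh])
        (isRightTransversal_sigma_mul hD hSx) hS).symm
    _ = ∑ x ∈ D, cx x (trx x (Submodule.Quotient.mk m)) := by
      rw [Finset.sum_sigma, Finset.sum_congr rfl hcx_trx]
end

section
/- For any types α and β and any natural number n, there is an equivalence between the n-th symmetric power of the sum type, Sym n (α ⊕ β), and the sigma type Σ_{i : Fin (n+1)}, Sym i α × Sym (n − i) β. In other words, an unordered n-tuple of elements of α ⊕ β is the same as a choice of i ≤ n together with an unordered i-tuple from α and an unordered (n−i)-tuple from β. -/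
/-! A multiset over `α ⊕ β` is the disjoint sum of its left and right parts, and these parts can be
chosen freely; the cardinality `i` of the left part then indexes the decomposition. -/

namespace Multiset

variable {α β : Type*}

theorem filterMap_const_none (s : Multiset α) : s.filterMap (fun _ => (none : Option β)) = 0 := by
  induction s using Multiset.induction with
  | empty => rfl
  | cons a s ih => rwa [filterMap_cons_none _ _ rfl]

@[simp]
theorem filterMap_getLeft?_disjSum (s : Multiset α) (t : Multiset β) :
    (s.disjSum t).filterMap Sum.getLeft? = s := by
  simp [disjSum, filterMap_map, Function.comp_def, filterMap_const_none]

@[simp]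
theorem filterMap_getRight?_disjSum (s : Multiset α) (t : Multiset β) :
    (s.disjSum t).filterMap Sum.getRight? = t := by
  simp [disjSum, filterMap_map, Function.comp_def, filterMap_const_none]

theorem disjSum_filterMap_getLeft?_filterMap_getRight? (m : Multiset (α ⊕ β)) :
    (m.filterMap Sum.getLeft?).disjSum (m.filterMap Sum.getRight?) = m := by
  induction m using Multiset.induction with
  | empty => rfl
  | cons a m ih =>
    rcases a with a | b
    · rw [filterMap_cons_some Sum.getLeft? _ _ rfl,
        filterMap_cons_none (f := Sum.getRight?) _ _ rfl, disjSum, map_cons, cons_add, ← disjSum, ih]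
    · rw [filterMap_cons_none (f := Sum.getLeft?) _ _ rfl,
        filterMap_cons_some Sum.getRight? _ _ rfl, disjSum, map_cons, add_cons, ← disjSum, ih]

def sumEquiv : Multiset (α ⊕ β) ≃ Multiset α × Multiset β where
  toFun m := (m.filterMap Sum.getLeft?, m.filterMap Sum.getRight?)
  invFun p := p.1.disjSum p.2
  left_inv := disjSum_filterMap_getLeft?_filterMap_getRight?
  right_inv p := by simp

theorem card_sumEquiv_symm (p : Multiset α × Multiset β) :
    card (sumEquiv.symm p) = card p.1 + card p.2 :=
  card_disjSum _ _

def cardAddEqEquivSigmaSym (n : ℕ) :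
    {p : Multiset α × Multiset β // card p.1 + card p.2 = n} ≃
      (i : Fin (n + 1)) × (Sym α i × Sym β (n - i)) where
  toFun p := ⟨⟨card p.1.1, by omega⟩, ⟨p.1.1, rfl⟩, ⟨p.1.2, by simp only; omega⟩⟩
  invFun x := ⟨(x.2.1, x.2.2), by simp only [Sym.card_coe]; omega⟩
  left_inv _ := rfl
  right_inv := by
    rintro ⟨⟨i, hi⟩, ⟨s, hs : card s = i⟩, t⟩
    subst hs
    rfl

end Multiset

def Sym.sumEquiv {α β : Type*} (n : ℕ) :
    Sym (α ⊕ β) n ≃ (i : Fin (n + 1)) × (Sym α i × Sym β (n - i)) :=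
  (Multiset.sumEquiv.symm.subtypeEquiv fun p => by rw [Multiset.card_sumEquiv_symm]).symm.trans
    (Multiset.cardAddEqEquivSigmaSym n)

/-- The `n`-th symmetric power of a sum type decomposes: an unordered `n`-tuple
of elements of `α ⊕ β` is the same as a choice of `i ≤ n` together with an
unordered `i`-tuple from `α` and an unordered `(n-i)`-tuple from `β`. -/
theorem sym_sum_equiv (α β : Type*) (n : ℕ) :
    Nonempty (Sym (α ⊕ β) n ≃
      (i : Fin (n + 1)) × (Sym α (i : ℕ) × Sym β (n - (i : ℕ)))) :=
  ⟨Sym.sumEquiv n⟩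
end

section
/- Let p be a prime, n ≥ 0, and let j₁, …, j_m be positive natural numbers with m ≥ 2 and j₁ + ⋯ + j_m = pⁿ. Then the multinomial coefficient (pⁿ)! / (j₁! ⋯ j_m!) is divisible by p. -/
/-! Splitting off one part `jₐ` factors the multinomial coefficient as
`(pⁿ choose jₐ)` times the multinomial coefficient of the remaining parts, and
`p ∣ (pⁿ choose k)` whenever `0 < k < pⁿ`; since there are at least two positive
parts, `0 < jₐ < pⁿ`. -/

theorem Nat.choose_sum_dvd_multinomial {α : Type*} {s : Finset α} {a : α} (ha : a ∈ s)
    (f : α → ℕ) : (∑ i ∈ s, f i).choose (f a) ∣ Nat.multinomial s f := by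
  classical
  have hnot : a ∉ s.erase a := Finset.notMem_erase a s
  rw [← Finset.insert_erase ha, Nat.multinomial_insert hnot, Finset.sum_insert hnot]
  exact dvd_mul_right _ _

/-- If `j₁, …, j_m` are positive naturals with `m ≥ 2` whose sum is a prime
power `p ^ n`, then the multinomial coefficient `(p^n)! / (j₁! ⋯ j_m!)` is
divisible by `p`. -/
theorem prime_dvd_multinomial_of_sum_prime_pow (p n m : ℕ) (hp : p.Prime)
    (hm : 2 ≤ m) (j : Fin m → ℕ) (hj : ∀ i, 0 < j i)
    (hsum : ∑ i, j i = p ^ n) :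
    p ∣ Nat.multinomial Finset.univ j := by
  let a : Fin m := ⟨0, by omega⟩
  let b : Fin m := ⟨1, hm⟩
  have hba : b ≠ a := by simp [a, b, Fin.ext_iff]
  have hlt : j a < p ^ n :=
    hsum ▸ Finset.single_lt_sum hba (Finset.mem_univ a) (Finset.mem_univ b) (hj b)
      fun k _ _ => (hj k).le
  have hchoose : p ∣ (p ^ n).choose (j a) := hp.dvd_choose_pow (hj a).ne' hlt.ne
  exact hchoose.trans (hsum ▸ Nat.choose_sum_dvd_multinomial (Finset.mem_univ a) j)
end

section
/- Let k be a field of characteristic p > 0, let A be a commutative k-algebra, and let N = pⁿ. Consider the k-linear multiplication map μ : (A^{⊗N})^{S_N} → A from the S_N-invariants of the N-fold tensor power of A (over k) to A, induced by a₁ ⊗ ⋯ ⊗ a_N ↦ a₁⋯a_N. Then the image of μ is exactly the k-linear span of the set {a^{pⁿ} : a ∈ A}. -/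
/-!
Expand a symmetric tensor `z` in the basis `⨂ᵢ b (f i)`, `f : Fin pⁿ → ι`, induced by a basis
`b` of `A`: its coefficients `c f` are invariant under permuting the positions, and its product
is `∑ c f • ∏ᵢ b (f i)`. Group these terms into orbits of the cyclic group `ℤ/pⁿ` acting on the
positions. Each orbit has `p`-power size, so in characteristic `p` it contributes `0` unless it
is a single constant function `f ≡ j`, whose term `c f • b j ^ pⁿ` lies in the span of `pⁿ`-th
powers. Conversely `a ^ pⁿ` is the product of the symmetric tensor `a ⊗ ⋯ ⊗ a`.
-/

open scoped TensorProduct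

/-- The permutation action of `σ : S_N` on the `N`-fold tensor power. -/
noncomputable def permTensor (R M : Type*) [CommRing R] [AddCommGroup M] [Module R M]
    (n : ℕ) (σ : Equiv.Perm (Fin n)) :
    (⨂[R] (_ : Fin n), M) →ₗ[R] ⨂[R] (_ : Fin n), M :=
  (PiTensorProduct.reindex R (fun _ : Fin n => M) σ).toLinearMap

open PiTensorProduct MulAction

theorem IsPGroup.sum_mem_of_forall_fixedPoints_mem {p : ℕ} [Fact p.Prime] {G α M : Type*}
    [Group G] [Finite G] [MulAction G α] [AddCommMonoid M]
    (hG : IsPGroup p G) (hM : ∀ m : M, p • m = 0) (W : AddSubmonoid M) (T : α → M)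
    (hT : ∀ (g : G) a, T (g • a) = T a) (hW : ∀ a ∈ fixedPoints G α, T a ∈ W)
    (S : Finset α) (hS : ∀ (g : G), ∀ a ∈ S, g • a ∈ S) :
    ∑ a ∈ S, T a ∈ W := by
  classical
  induction S using Finset.strongInduction with
  | H S ih =>
  obtain rfl | ⟨a, ha⟩ := S.eq_empty_or_nonempty
  · simp [W.zero_mem]
  set O := (Finite.finite_mulAction_orbit (M := G) a).toFinset
  have hO : ∀ b, b ∈ O ↔ b ∈ orbit G a := fun b => Set.Finite.mem_toFinset _
  have hOS : O ⊆ S := by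
    intro b hb
    obtain ⟨g, rfl⟩ := (hO b).1 hb
    exact hS g a ha
  have hrest : ∑ b ∈ S \ O, T b ∈ W := by
    refine ih _ (Finset.sdiff_ssubset hOS ⟨a, (hO a).2 (mem_orbit_self a)⟩) fun g b hb => ?_
    simp only [Finset.mem_sdiff, hO] at hb ⊢
    exact ⟨hS g b hb.1, fun h => hb.2 (orbit_eq_iff.2 h ▸ mem_orbit_smul g b)⟩
  have horbit : ∑ b ∈ O, T b = O.card • T a := by
    rw [← Finset.sum_const]
    refine Finset.sum_congr rfl fun b hb => ?_
    obtain ⟨g, rfl⟩ := (hO b).1 hb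
    exact hT g a
  rw [← Finset.sum_sdiff hOS, horbit]
  refine W.add_mem hrest ?_
  obtain ⟨k, hk⟩ : ∃ k, O.card = p ^ k := by
    have := (Finite.finite_mulAction_orbit (M := G) a).to_subtype
    simpa only [Nat.card_coe_set_eq, Set.ncard_eq_toFinset_card _ (Finite.finite_mulAction_orbit a)]
      using hG.card_orbit a
  rw [hk]
  rcases k with _ | k
  · rw [pow_zero, one_smul]
    refine hW a (subsingleton_orbit_iff_mem_fixedPoints.1 fun x hx y hy => ?_)
    exact Finset.card_le_one.1 (pow_zero p ▸ hk).le x ((hO x).2 hx) y ((hO y).2 hy)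
  · rw [pow_succ, mul_nsmul, hM]
    exact W.zero_mem

attribute [local instance] arrowAction in
theorem sum_mem_of_comp_perm_invariant {p : ℕ} [Fact p.Prime] (n : ℕ) {ι M : Type*}
    [AddCommMonoid M] (hM : ∀ m : M, p • m = 0) (W : AddSubmonoid M)
    (T : (Fin (p ^ n) → ι) → M) (hT : ∀ (σ : Equiv.Perm (Fin (p ^ n))) f, T (f ∘ σ) = T f)
    (hW : ∀ j, T (fun _ => j) ∈ W) (S : Finset (Fin (p ^ n) → ι))
    (hS : ∀ σ : Equiv.Perm (Fin (p ^ n)), ∀ f ∈ S, f ∘ σ ∈ S) :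
    ∑ f ∈ S, T f ∈ W := by
  have : NeZero (p ^ n) := ⟨pow_ne_zero n (Fact.out : p.Prime).ne_zero⟩
  have hG : IsPGroup p (Multiplicative (Fin (p ^ n))) := IsPGroup.of_card (n := n) (by simp)
  refine hG.sum_mem_of_forall_fixedPoints_mem hM W T (fun g f => hT (toPerm g⁻¹) f) ?_ S
    fun g f => hS (toPerm g⁻¹) f
  intro f hf
  have hconst : f = fun _ => f 0 := funext fun i => by
    have h : f ((Multiplicative.ofAdd (-i))⁻¹ • 0) = f 0 := congrFun (hf _) 0
    simpa using h
  exact hconst ▸ hW (f 0)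

theorem Basis.piTensorProduct_repr_permTensor {R M ι : Type*} [CommRing R] [AddCommGroup M]
    [Module R M] {n : ℕ} (b : Module.Basis ι R M) (σ : Equiv.Perm (Fin n))
    (z : ⨂[R] (_ : Fin n), M) (f : Fin n → ι) :
    (Basis.piTensorProduct fun _ => b).repr (permTensor R M n σ z) f =
      (Basis.piTensorProduct fun _ => b).repr z (f ∘ σ) := by
  let B := Basis.piTensorProduct fun _ : Fin n => b
  suffices (Finsupp.lapply f ∘ₗ B.repr.toLinearMap) ∘ₗ permTensor R M n σ =
      Finsupp.lapply (f ∘ σ) ∘ₗ B.repr.toLinearMap from LinearMap.congr_fun this z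
  refine PiTensorProduct.ext (MultilinearMap.ext fun x => ?_)
  simp only [LinearMap.compMultilinearMap_apply, LinearMap.comp_apply, permTensor,
    LinearEquiv.coe_coe, reindex_tprod, Finsupp.lapply_apply, B,
    Basis.piTensorProduct_repr_tprod_apply]
  exact Fintype.prod_equiv σ.symm _ _ fun i => by simp

theorem Basis.lift_mkPiAlgebra_eq_sum {R A ι : Type*} [CommSemiring R] [CommSemiring A]
    [Algebra R A] {n : ℕ} (b : Module.Basis ι R A) (z : ⨂[R] (_ : Fin n), A) :
    lift (MultilinearMap.mkPiAlgebra R (Fin n) A) z =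
      ∑ f ∈ ((Basis.piTensorProduct fun _ => b).repr z).support,
        (Basis.piTensorProduct fun _ => b).repr z f • ∏ i, b (f i) := by
  conv_lhs => rw [← (Basis.piTensorProduct fun _ => b).linearCombination_repr z]
  simp [Finsupp.linearCombination_apply, Finsupp.sum]

/-- Let `k` be a field of characteristic `p > 0` and `A` a commutative
`k`-algebra. The image of the multiplication map
`μ : (A^{⊗ pⁿ})^{S_{pⁿ}} → A` from the symmetric invariants of the `pⁿ`-fold
tensor power to `A` is exactly the `k`-linear span of `{a ^ pⁿ : a ∈ A}`. -/
theorem range_mul_on_symmetric_invariants (k A : Type*) [Field k] [CommRing A]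
    [Algebra k A] (p : ℕ) [CharP k p] (hp : p ≠ 0) (n : ℕ) :
    LinearMap.range
      ((PiTensorProduct.lift (MultilinearMap.mkPiAlgebra k (Fin (p ^ n)) A)).comp
        (⨅ σ : Equiv.Perm (Fin (p ^ n)),
          LinearMap.eqLocus (permTensor k A (p ^ n) σ) LinearMap.id).subtype) =
      Submodule.span k {x : A | ∃ a : A, x = a ^ (p ^ n)} := by
  have : Fact p.Prime := ⟨(CharP.char_is_prime_or_zero k p).resolve_right hp⟩
  have hA : ∀ a : A, p • a = 0 := fun a => by
    rw [← Nat.cast_smul_eq_nsmul k, CharP.cast_eq_zero, zero_smul]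
  apply le_antisymm
  · rintro _ ⟨⟨z, hz⟩, rfl⟩
    let b := Module.Basis.ofVectorSpace k A
    have hc : ∀ (σ : Equiv.Perm (Fin (p ^ n))) f,
        (Basis.piTensorProduct fun _ => b).repr z (f ∘ σ) =
          (Basis.piTensorProduct fun _ => b).repr z f := fun σ f => by
      rw [← Basis.piTensorProduct_repr_permTensor,
        LinearMap.mem_eqLocus.1 ((Submodule.mem_iInf _).1 hz σ), LinearMap.id_apply]
    simp only [LinearMap.comp_apply, Submodule.coe_subtype, Basis.lift_mkPiAlgebra_eq_sum b]
    refine sum_mem_of_comp_perm_invariant n hA (Submodule.span k _).toAddSubmonoid _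
      (fun σ f => ?_) (fun j => ?_) _ (fun σ f hf => ?_)
    · rw [hc]
      exact congrArg _ (Equiv.prod_comp σ fun i => b (f i))
    · exact Submodule.smul_mem _ _ (Submodule.subset_span ⟨b j, by simp⟩)
    · simpa [hc] using hf
  · rw [Submodule.span_le]
    rintro _ ⟨a, rfl⟩
    refine ⟨⟨tprod k fun _ => a, (Submodule.mem_iInf _).2 fun σ => ?_⟩, by simp⟩
    simp [permTensor]
end

section
/- Let F be a field and let M* and N* be nonnegatively graded modules over the polynomial ring F[τ] with τ in degree 1, which are free as F[τ]-modules, and let u : M* → N* be a degree-preserving F[τ]-module homomorphism. If the induced map u ⊗_{F[τ], τ↦1} F : M* ⊗ F → N* ⊗ F (specializing τ to 1) is surjective and the induced map u ⊗_{F[τ], τ↦0} F (specializing τ to 0) is injective, then u is an isomorphism. -/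
/-- Iterated application of the degree-raising maps of a nonnegatively graded
`F[τ]`-module presented as a sequence of `F`-vector spaces with connecting
maps. -/
def iterShift {F : Type*} [Field F] {N : ℕ → Type*} [∀ n, AddCommGroup (N n)]
    [∀ n, Module F (N n)] (τ : ∀ n, N n →ₗ[F] N (n + 1)) :
    ∀ (k n : ℕ), N n →ₗ[F] N (n + k)
  | 0, _ => LinearMap.id
  | (k + 1), n => (τ (n + k)).comp (iterShift τ k n)

/-!
Injectivity of `u ⊗ F` at `τ = 0` says that `τ` can be divided out through `u`: if `u x` is
divisible by `τ`, then so is `x`. Since `N` is `τ`-torsion free, an element `x` of degree `n + 1`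
in the kernel of `u` is then `τ w` with `u w = 0`, so `u` is injective by induction on the degree.
Surjectivity at `τ = 1` writes `τ^k y = u x`; dividing by `τ` through `u` `k` times gives a
preimage of `y`.
-/

namespace GradedFreeModule

variable {F : Type*} [Field F] {M N : ℕ → Type*} [∀ n, AddCommGroup (M n)] [∀ n, Module F (M n)]
  [∀ n, AddCommGroup (N n)] [∀ n, Module F (N n)]
  {τM : ∀ n, M n →ₗ[F] M (n + 1)} {τN : ∀ n, N n →ₗ[F] N (n + 1)} {u : ∀ n, M n →ₗ[F] N n}

theorem exists_apply_eq_of_apply_eq_iterShift (hNfree : ∀ n, Function.Injective (τN n))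
    (hu : ∀ (n : ℕ) (x : M n), u (n + 1) (τM n x) = τN n (u n x))
    (hinj0 : ∀ (n : ℕ) (x : M (n + 1)),
      (∃ z : N n, τN n z = u (n + 1) x) → ∃ w : M n, τM n w = x) :
    ∀ (k n : ℕ) (y : N n) (x : M (n + k)), u (n + k) x = iterShift τN k n y → ∃ x', u n x' = y
  | 0, _, _, x, h => ⟨x, h⟩
  | k + 1, n, y, x, h => by
    obtain ⟨w, rfl⟩ := hinj0 (n + k) x ⟨iterShift τN k n y, h.symm⟩
    have hw : τN (n + k) (u (n + k) w) = τN (n + k) (iterShift τN k n y) := by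
      rw [← hu]; exact h
    exact exists_apply_eq_of_apply_eq_iterShift hNfree hu hinj0 k n y w (hNfree _ hw)

theorem injective_of_injective_zero (hNfree : ∀ n, Function.Injective (τN n))
    (hu : ∀ (n : ℕ) (x : M n), u (n + 1) (τM n x) = τN n (u n x))
    (hinj0zero : Function.Injective (u 0))
    (hinj0 : ∀ (n : ℕ) (x : M (n + 1)),
      (∃ z : N n, τN n z = u (n + 1) x) → ∃ w : M n, τM n w = x) :
    ∀ n, Function.Injective (u n)
  | 0 => hinj0zero
  | n + 1 => by
    rw [injective_iff_map_eq_zero]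
    intro x hx
    obtain ⟨w, rfl⟩ := hinj0 n x ⟨0, by rw [hx, map_zero]⟩
    have huw : u n w = 0 := hNfree n (by rw [← hu, hx, map_zero])
    have hw : w = 0 :=
      injective_of_injective_zero hNfree hu hinj0zero hinj0 n (huw.trans (map_zero _).symm)
    rw [hw, map_zero]

end GradedFreeModule

/-- `M n` is the degree-`n` part and `τM n` multiplication by `τ`; freeness over `F[τ]` amounts to
injectivity of the `τN n`, `hsurj1` to surjectivity of `u ⊗_{τ↦1} F` and `hinj0zero`, `hinj0` to
injectivity of `u ⊗_{τ↦0} F`. -/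
theorem graded_free_module_iso_general (F : Type*) [Field F]
    (M N : ℕ → Type*) [∀ n, AddCommGroup (M n)] [∀ n, Module F (M n)]
    [∀ n, AddCommGroup (N n)] [∀ n, Module F (N n)]
    (τM : ∀ n, M n →ₗ[F] M (n + 1)) (τN : ∀ n, N n →ₗ[F] N (n + 1))
    (hNfree : ∀ n, Function.Injective (τN n))
    (u : ∀ n, M n →ₗ[F] N n)
    (hu : ∀ (n : ℕ) (x : M n), u (n + 1) (τM n x) = τN n (u n x))
    (hsurj1 : ∀ (n : ℕ) (y : N n), ∃ (k : ℕ) (x : M (n + k)),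
      u (n + k) x = iterShift τN k n y)
    (hinj0zero : Function.Injective (u 0))
    (hinj0 : ∀ (n : ℕ) (x : M (n + 1)),
      (∃ z : N n, τN n z = u (n + 1) x) → ∃ w : M n, τM n w = x) :
    ∀ n, Function.Bijective (u n) := by
  intro n
  refine ⟨GradedFreeModule.injective_of_injective_zero hNfree hu hinj0zero hinj0 n, fun y => ?_⟩
  obtain ⟨k, x, hx⟩ := hsurj1 n y
  exact GradedFreeModule.exists_apply_eq_of_apply_eq_iterShift hNfree hu hinj0 k n y x hx

/-- A nonnegatively graded `F[τ]`-module (deg τ = 1) is presented as a sequence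
of `F`-vector spaces `M n` together with the multiplication-by-`τ` maps
`τM n : M n → M (n+1)`; over a field, such a module is free with a homogeneous
basis iff all the maps `τM n` are injective.  If `u : M* → N*` is a morphism of
such graded modules, both free, such that `u ⊗_{τ↦1} F` is surjective (every
`y ∈ N n` is hit by `u` after multiplying by some power of `τ`) and
`u ⊗_{τ↦0} F` is injective (in each degree `u` is injective modulo `τ`), then
`u` is an isomorphism. -/
theorem graded_free_module_iso (F : Type*) [Field F]
    (M N : ℕ → Type*) [∀ n, AddCommGroup (M n)] [∀ n, Module F (M n)]
    [∀ n, AddCommGroup (N n)] [∀ n, Module F (N n)]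
    (τM : ∀ n, M n →ₗ[F] M (n + 1)) (τN : ∀ n, N n →ₗ[F] N (n + 1))
    (hMfree : ∀ n, Function.Injective (τM n))
    (hNfree : ∀ n, Function.Injective (τN n))
    (u : ∀ n, M n →ₗ[F] N n)
    (hu : ∀ (n : ℕ) (x : M n), u (n + 1) (τM n x) = τN n (u n x))
    (hsurj1 : ∀ (n : ℕ) (y : N n), ∃ (k : ℕ) (x : M (n + k)),
      u (n + k) x = iterShift τN k n y)
    (hinj0zero : Function.Injective (u 0))
    (hinj0 : ∀ (n : ℕ) (x : M (n + 1)),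
      (∃ z : N n, τN n z = u (n + 1) x) → ∃ w : M n, τM n w = x) :
    ∀ n, Function.Bijective (u n) :=
  graded_free_module_iso_general F M N τM τN hNfree u hu hsurj1 hinj0zero hinj0
end

section
/- Let k be a field (or any commutative ring), and let B = k[x, y, (xy)⁻¹] be the localization of the polynomial ring k[x,y] at the element xy, with the k-algebra involution σ swapping x and y. Then the subalgebra of σ-invariant elements of B is exactly the k-subalgebra generated by x + y, xy and (xy)⁻¹. (Geometrically: the symmetric square of 𝔸¹ ∖ {0} is 𝔸¹ × (𝔸¹ ∖ {0}).) -/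
open MvPolynomial

/-- The ring `B = k[x,y,(xy)⁻¹]`. -/
abbrev LocXY (k : Type*) [CommRing k] : Type _ :=
  Localization.Away (X 0 * X 1 : MvPolynomial (Fin 2) k)

/-- The image of `x` in `B`. -/
noncomputable def xB (k : Type*) [CommRing k] : LocXY k :=
  algebraMap (MvPolynomial (Fin 2) k) (LocXY k) (X 0)

/-- The image of `y` in `B`. -/
noncomputable def yB (k : Type*) [CommRing k] : LocXY k :=
  algebraMap (MvPolynomial (Fin 2) k) (LocXY k) (X 1)

/-- The image of `xy` in `B`. -/
noncomputable def xyB (k : Type*) [CommRing k] : LocXY k :=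
  algebraMap (MvPolynomial (Fin 2) k) (LocXY k) (X 0 * X 1)

/-- The inverse `(xy)⁻¹` in `B`. -/
noncomputable def xyInv (k : Type*) [CommRing k] : LocXY k :=
  IsLocalization.Away.invSelf (S := LocXY k) (X 0 * X 1 : MvPolynomial (Fin 2) k)

/-! Every element of `B` is `p / (xy)ⁿ` with `p ∈ k[x,y]`, and `σ (p / (xy)ⁿ) = σ p / (xy)ⁿ` because
`σ` fixes `xy`. So `p / (xy)ⁿ` is invariant iff `σ p = p` holds in `B`, i.e. after multiplying by
some `(xy)ᵐ`; replacing `p` by `(xy)ᵐ p` makes `p` a symmetric polynomial. Hence the invariants are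
generated by `(xy)⁻¹` together with the symmetric polynomials, which are generated by `x + y`
and `xy`. -/

namespace MvPolynomial

theorem symmetricSubalgebra_eq_adjoin_esymm {σ R : Type*} [CommRing R] [Fintype σ] {n : ℕ}
    (hn : Fintype.card σ ≤ n) :
    symmetricSubalgebra σ R = Algebra.adjoin R (Set.range fun i : Fin n ↦ esymm σ R (i + 1)) := by
  rw [Algebra.adjoin_range_eq_range_aeval]
  ext p
  refine ⟨fun hp ↦ ?_, ?_⟩
  · obtain ⟨q, hq⟩ := esymmAlgHom_surjective R hn ⟨p, hp⟩
    exact ⟨q, by rw [AlgHom.toRingHom_eq_coe, RingHom.coe_coe, ← esymmAlgHom_apply, hq]⟩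
  · rintro ⟨q, rfl⟩
    rw [AlgHom.toRingHom_eq_coe, RingHom.coe_coe, ← esymmAlgHom_apply]
    exact Subtype.prop _

theorem symmetricSubalgebra_fin_two (R : Type*) [CommRing R] :
    symmetricSubalgebra (Fin 2) R = Algebra.adjoin R {X 0 + X 1, X 0 * X 1} := by
  rw [symmetricSubalgebra_eq_adjoin_esymm (n := 2) le_rfl]
  have h2 : esymm (Fin 2) R 2 = X 0 * X 1 := by
    rw [esymm, show Finset.univ.powersetCard 2 = {Finset.univ} by decide, Finset.sum_singleton,
      Fin.prod_univ_two]
  congr 1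
  ext p
  simp [Fin.exists_fin_two, eq_comm, esymm_one, h2]

theorem equalizer_rename_swap_fin_two (R : Type*) [CommRing R] :
    AlgHom.equalizer (rename (Equiv.swap (0 : Fin 2) 1)) (AlgHom.id R _) =
      symmetricSubalgebra (Fin 2) R := by
  ext p
  refine ⟨fun hp ↦ ?_, fun hp ↦ (mem_symmetricSubalgebra p).1 hp _⟩
  rw [mem_symmetricSubalgebra]
  intro e
  obtain rfl | rfl : e = 1 ∨ e = Equiv.swap 0 1 := by revert e; decide
  · exact rename_id_apply p
  · exact hp

end MvPolynomial

namespace IsLocalization.Away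

variable {k R S : Type*} [CommSemiring k] [CommSemiring R] [CommSemiring S] [Algebra k R]
  [Algebra k S] [Algebra R S] {r : R} [IsLocalization.Away r S]
  {τ : R →ₐ[k] R} {σ : S →ₐ[k] S}

theorem eq_algebraMap_mul_invSelf_pow {b : S} {p : R} {n : ℕ}
    (h : b * algebraMap R S r ^ n = algebraMap R S p) :
    b = algebraMap R S p * invSelf (S := S) r ^ n := by
  rw [← h, mul_assoc, ← mul_pow, mul_invSelf, one_pow, mul_one]

theorem map_invSelf_of_map_algebraMap (hr : τ r = r)
    (hσ : ∀ p, σ (algebraMap R S p) = algebraMap R S (τ p)) :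
    σ (invSelf r) = invSelf (S := S) r := by
  apply (algebraMap_isUnit (S := S) r).mul_left_cancel
  calc algebraMap R S r * σ (invSelf r) = σ (algebraMap R S r * invSelf r) := by
        rw [map_mul, hσ, hr]
    _ = algebraMap R S r * invSelf r := by rw [mul_invSelf, map_one]

theorem equalizer_eq_map_sup_adjoin_invSelf [IsScalarTower k R S] (hr : τ r = r)
    (hσ : ∀ p, σ (algebraMap R S p) = algebraMap R S (τ p)) :
    AlgHom.equalizer σ (AlgHom.id k S) =
      (AlgHom.equalizer τ (AlgHom.id k R)).map (IsScalarTower.toAlgHom k R S) ⊔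
        Algebra.adjoin k {invSelf r} := by
  refine le_antisymm (fun b hb ↦ ?_) (sup_le ?_ ?_)
  · obtain ⟨n, p, hp⟩ := surj r b
    have hτp : algebraMap R S (τ p) = algebraMap R S p := by
      rw [← hσ, ← hp, map_mul, map_pow, hσ, hr]
      exact congrArg (· * _) hb
    obtain ⟨m, hm⟩ := exists_of_eq r hτp
    have hfix : τ (r ^ m * p) = r ^ m * p := by rw [map_mul, map_pow, hr, hm]
    have hb' : b * algebraMap R S r ^ (n + m) = algebraMap R S (r ^ m * p) := by
      rw [pow_add, ← mul_assoc, hp, map_mul, map_pow, mul_comm]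
    rw [eq_algebraMap_mul_invSelf_pow hb']
    exact Algebra.mul_mem_sup ⟨_, hfix, rfl⟩ (pow_mem (Algebra.self_mem_adjoin_singleton k _) _)
  · rintro _ ⟨p, hp, rfl⟩
    exact (hσ p).trans (congrArg _ hp)
  · rw [Algebra.adjoin_le_iff, Set.singleton_subset_iff]
    exact map_invSelf_of_map_algebraMap hr hσ

end IsLocalization.Away

/-- There is a `k`-algebra involution `σ` of `B = k[x,y,(xy)⁻¹]` swapping `x`
and `y`, and for any such `σ` the set of `σ`-invariant elements of `B` is
exactly the `k`-subalgebra generated by `x + y`, `xy` and `(xy)⁻¹`. -/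
theorem invariants_of_swap_on_localization (k : Type*) [CommRing k] :
    (∃ σ : LocXY k ≃ₐ[k] LocXY k, σ (xB k) = yB k ∧ σ (yB k) = xB k) ∧
    ∀ σ : LocXY k ≃ₐ[k] LocXY k, σ (xB k) = yB k → σ (yB k) = xB k →
      {b : LocXY k | σ b = b} =
        (Algebra.adjoin k {xB k + yB k, xyB k, xyInv k} : Set (LocXY k)) := by
  set swap := Equiv.swap (0 : Fin 2) 1
  have hxy : rename swap (X 0 * X 1 : MvPolynomial (Fin 2) k) = X 0 * X 1 := by
    simp [swap, mul_comm]
  refine ⟨?_, fun σ hx hy ↦ ?_⟩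
  · have hpowers : (Submonoid.powers (X 0 * X 1)).map (renameEquiv k swap) =
        Submonoid.powers (X 0 * X 1 : MvPolynomial (Fin 2) k) := by
      rw [Submonoid.map_powers, renameEquiv_apply, hxy]
    refine ⟨IsLocalization.algEquivOfAlgEquiv (LocXY k) (LocXY k) (renameEquiv k swap) hpowers,
      ?_, ?_⟩ <;>
      simp only [xB, yB, IsLocalization.algEquivOfAlgEquiv_eq, renameEquiv_apply, rename_X, swap,
        Equiv.swap_apply_left, Equiv.swap_apply_right]
  · have hσ : ∀ p : MvPolynomial (Fin 2) k,
        σ (algebraMap _ (LocXY k) p) = algebraMap _ _ (rename swap p) := by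
      refine DFunLike.congr_fun (algHom_ext (f := σ.toAlgHom.comp
        (IsScalarTower.toAlgHom k _ (LocXY k))) (g := (IsScalarTower.toAlgHom k _ _).comp
          (rename swap)) (Fin.forall_fin_two.2 ⟨?_, ?_⟩))
      · simpa [swap, xB, yB] using hx
      · simpa [swap, xB, yB] using hy
    have := IsLocalization.Away.equalizer_eq_map_sup_adjoin_invSelf hxy (σ := σ.toAlgHom) hσ
    rw [equalizer_rename_swap_fin_two, symmetricSubalgebra_fin_two, AlgHom.map_adjoin,
      ← Algebra.adjoin_union] at this
    have hgens : ({xB k + yB k, xyB k, xyInv k} : Set (LocXY k)) =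
        IsScalarTower.toAlgHom k (MvPolynomial (Fin 2) k) (LocXY k) '' {X 0 + X 1, X 0 * X 1} ∪
          {xyInv k} := by
      rw [Set.image_insert_eq, Set.image_singleton, Set.insert_union, Set.singleton_union, map_add]
      rfl
    rw [hgens]
    exact congrArg SetLike.coe this
end
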